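/- Let μ, ν be Schwartz functions on ℝⁿ and M ≥ −1 an integer such that all derivatives D^τ μ̂(0) = 0 for |τ| ≤ M. Then for any N > 0 there is a constant C_N such that sup_{z ∈ ℝⁿ} |(μ_t * ν)(z)| (1+|z|)^N ≤ C_N t^{M+1} for all 0 < t ≤ 2, where μ_t(x) = t^{-n} μ(x/t). -/

import Mathlib

open MeasureTheory SchwartzMap

/-!
After the substitution `y = t • x` the integral becomes `∫ μ x * ν (z - t • x) dx`. Subtract from
`ν (z - t • x)` its Taylor polynomial of degree `M` at `z`: every term is a homogeneous polynomial
of degree `≤ M` in `x`, and these integrate to zero against `μ` because the `k`-th derivative of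
`𝓕 μ` at `0` is `(-2πi)^k` times the `k`-th moment tensor of `μ`. The Taylor remainder is
`O(t^(M+1) ‖x‖^(M+1))`, and Peetre's inequality `1 + ‖z‖ ≤ (1 + ‖u‖) (1 + ‖z - u‖)` turns the
decay of the derivatives of `ν` at the intermediate points `u` into the weight `(1 + ‖z‖)^N`, at the
cost of a polynomial factor in `‖x‖` that the decay of `μ` absorbs.
-/

open Set Filter FourierTransform
open scoped Nat RealInnerProductSpace

theorem mul_pow_mul_one_add_mul_pow_le {t a : ℝ} (ht : 0 ≤ t) (ht2 : t ≤ 2) (ha : 0 ≤ a) (m K : ℕ) :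
    (t * a) ^ m * (1 + t * a) ^ K ≤ 2 ^ K * t ^ m * (1 + a) ^ (m + K) := by
  have h1 : (t * a) ^ m ≤ t ^ m * (1 + a) ^ m := by
    rw [mul_pow]; gcongr; linarith
  have h2 : (1 + t * a) ^ K ≤ 2 ^ K * (1 + a) ^ K := by
    rw [← mul_pow]; gcongr; nlinarith
  calc (t * a) ^ m * (1 + t * a) ^ K ≤ t ^ m * (1 + a) ^ m * (2 ^ K * (1 + a) ^ K) := by
        gcongr
    _ = 2 ^ K * t ^ m * (1 + a) ^ (m + K) := by ring

section Taylor

variable {E F : Type*} [NormedAddCommGroup E] [NormedSpace ℝ E]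
  [NormedAddCommGroup F] [NormedSpace ℝ F]

/-- The Taylor polynomial of `f` at `z` of degree `m - 1`, applied to the increment `w`. -/
noncomputable def taylorPoly (f : E → F) (m : ℕ) (z w : E) : F :=
  ∑ k ∈ Finset.range m, (k ! : ℝ)⁻¹ • iteratedFDeriv ℝ k f z (fun _ => w)

theorem taylorPoly_comp_eq_sum {G : Type*} [NormedAddCommGroup G] [NormedSpace ℝ G]
    (f : E → F) (m : ℕ) (z : E) (T : G →L[ℝ] E) (x : G) :
    taylorPoly f m z (T x) = ∑ k ∈ Finset.range m,
      ((k ! : ℝ)⁻¹ • (iteratedFDeriv ℝ k f z).compContinuousLinearMap fun _ => T) (fun _ => x) :=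
  rfl

theorem iteratedDeriv_comp_add_smul {f : E → F} {k : ℕ} (hf : ContDiff ℝ k f) (z w : E) (s : ℝ) :
    iteratedDeriv k (fun s : ℝ => f (z + s • w)) s =
      iteratedFDeriv ℝ k f (z + s • w) (fun _ => w) := by
  have hline : (fun s : ℝ => f (z + s • w)) =
      (fun y => f (z + y)) ∘ ContinuousLinearMap.smulRight (1 : ℝ →L[ℝ] ℝ) w := by
    ext s; simp
  rw [iteratedDeriv_eq_iteratedFDeriv, hline,
    ContinuousLinearMap.iteratedFDeriv_comp_right _ (f := fun y => f (z + y))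
      (hf.comp (contDiff_const.add contDiff_id)) s le_rfl]
  simp [iteratedFDeriv_comp_add_left]

theorem norm_sub_taylorPoly_le {f : E → F} {m : ℕ} (hf : ContDiff ℝ m f) {z w : E} {C : ℝ}
    (hC : ∀ s ∈ Icc (0 : ℝ) 1, ‖iteratedFDeriv ℝ m f (z + s • w)‖ ≤ C) :
    ‖f (z + w) - taylorPoly f m z w‖ ≤ C * ‖w‖ ^ m := by
  cases m with
  | zero => simpa [taylorPoly] using hC 1 (right_mem_Icc.2 zero_le_one)
  | succ p =>
    set g : ℝ → F := fun s => f (z + s • w)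
    have hg : ContDiff ℝ (p + 1) g :=
      hf.comp (contDiff_const.add (contDiff_id.smul contDiff_const))
    have hderiv : ∀ k ≤ p + 1, ∀ s ∈ Icc (0 : ℝ) 1, iteratedDerivWithin k g (Icc 0 1) s =
        iteratedFDeriv ℝ k f (z + s • w) (fun _ => w) := fun k hk s hs => by
      rw [iteratedDerivWithin_eq_iteratedDeriv (uniqueDiffOn_Icc zero_lt_one)
        (hg.of_le (mod_cast hk)).contDiffAt hs,
        iteratedDeriv_comp_add_smul (hf.of_le (mod_cast hk))]
    have hbound : ∀ s ∈ Icc (0 : ℝ) 1,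
        ‖iteratedDerivWithin (p + 1) g (Icc 0 1) s‖ ≤ C * ‖w‖ ^ (p + 1) := fun s hs => by
      rw [hderiv _ le_rfl s hs]
      refine ((iteratedFDeriv ℝ (p + 1) f (z + s • w)).le_opNorm _).trans ?_
      simpa using mul_le_mul_of_nonneg_right (hC s hs) (by positivity)
    have htaylor : taylorWithinEval g p (Icc 0 1) 0 1 = taylorPoly f (p + 1) z w := by
      rw [taylor_within_apply]
      refine Finset.sum_congr rfl fun k hk => ?_
      rw [hderiv k (by simp at hk; omega) 0 (left_mem_Icc.2 zero_le_one)]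
      simp
    have := taylor_mean_remainder_bound zero_le_one hg.contDiffOn (right_mem_Icc.2 zero_le_one)
      hbound
    simp only [g, one_smul, htaylor, sub_zero, one_pow, mul_one] at this
    have hC0 : 0 ≤ C := (norm_nonneg _).trans (hC 0 (left_mem_Icc.2 zero_le_one))
    exact this.trans (div_le_self (by positivity) (Nat.one_le_cast.2 p.factorial_pos))

end Taylor

section Rescale

variable {V : Type*} [NormedAddCommGroup V] [InnerProductSpace ℝ V] [FiniteDimensional ℝ V]
  [MeasurableSpace V] [BorelSpace V]

theorem integral_rescale_mul_comp_sub (μ ν : V → ℂ) {t : ℝ} (ht : 0 < t) (z : V) :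
    ∫ y, (t ^ (-(Module.finrank ℝ V : ℝ)) : ℝ) • μ (t⁻¹ • y) * ν (z - y) =
      ∫ x, μ x * ν (z - t • x) := by
  have := Measure.integral_comp_smul_of_nonneg volume (fun y => μ (t⁻¹ • y) * ν (z - y)) t
    (hR := ht.le)
  simp only [inv_smul_smul₀ ht.ne'] at this
  simp_rw [smul_mul_assoc, integral_smul, this, Real.rpow_neg ht.le, Real.rpow_natCast]

end Rescale

namespace SchwartzMap

section Weights

variable {E F : Type*} [NormedAddCommGroup E] [NormedSpace ℝ E]
  [NormedAddCommGroup F] [NormedSpace ℝ F]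

theorem norm_iteratedFDeriv_mul_one_add_norm_pow_le (f : 𝓢(E, F)) (K n : ℕ) (u z : E) :
    ‖iteratedFDeriv ℝ n f u‖ * (1 + ‖z‖) ^ K ≤
      2 ^ K * (Finset.Iic (K, n)).sup (fun p => SchwartzMap.seminorm ℝ p.1 p.2) f *
        (1 + ‖z - u‖) ^ K := by
  have hpeetre : 1 + ‖z‖ ≤ (1 + ‖u‖) * (1 + ‖z - u‖) := by
    have := norm_add_le u (z - u)
    rw [add_sub_cancel] at this
    nlinarith [norm_nonneg u, norm_nonneg (z - u)]
  calc ‖iteratedFDeriv ℝ n f u‖ * (1 + ‖z‖) ^ K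
      ≤ ‖iteratedFDeriv ℝ n f u‖ * ((1 + ‖u‖) * (1 + ‖z - u‖)) ^ K := by gcongr
    _ = (1 + ‖u‖) ^ K * ‖iteratedFDeriv ℝ n f u‖ * (1 + ‖z - u‖) ^ K := by
          rw [mul_pow]; ring
    _ ≤ _ := mul_le_mul_of_nonneg_right
          (one_add_le_sup_seminorm_apply (𝕜 := ℝ) (m := (K, n)) le_rfl le_rfl f u) (by positivity)

theorem exists_norm_sub_taylorPoly_mul_le (f : 𝓢(E, F)) (m K : ℕ) :
    ∃ A, 0 ≤ A ∧ ∀ z w : E, ‖f (z + w) - taylorPoly f m z w‖ * (1 + ‖z‖) ^ K ≤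
      A * ‖w‖ ^ m * (1 + ‖w‖) ^ K := by
  set A := 2 ^ K * (Finset.Iic (K, m)).sup (fun p => SchwartzMap.seminorm ℝ p.1 p.2) f
  refine ⟨A, by positivity, fun z w => ?_⟩
  have hz : 0 < (1 + ‖z‖) ^ K := by positivity
  have hC : ∀ s ∈ Icc (0 : ℝ) 1,
      ‖iteratedFDeriv ℝ m f (z + s • w)‖ ≤ A * (1 + ‖w‖) ^ K / (1 + ‖z‖) ^ K := by
    intro s hs
    rw [le_div_iff₀ hz]
    refine (norm_iteratedFDeriv_mul_one_add_norm_pow_le f K m _ z).trans ?_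
    have hdist : ‖z - (z + s • w)‖ ≤ ‖w‖ := by
      rw [sub_add_cancel_left, norm_neg, norm_smul, Real.norm_of_nonneg hs.1]
      exact mul_le_of_le_one_left (norm_nonneg w) hs.2
    gcongr
  rw [← le_div_iff₀ hz]
  calc ‖f (z + w) - taylorPoly f m z w‖
      ≤ A * (1 + ‖w‖) ^ K / (1 + ‖z‖) ^ K * ‖w‖ ^ m :=
        norm_sub_taylorPoly_le ((f.smooth ⊤).of_le (mod_cast le_top)) hC
    _ = A * ‖w‖ ^ m * (1 + ‖w‖) ^ K / (1 + ‖z‖) ^ K := by ring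

variable [MeasurableSpace E] [BorelSpace E] [SecondCountableTopology E] {μ : Measure E}
  [μ.HasTemperateGrowth]

theorem integrable_one_add_norm_pow_mul (f : 𝓢(E, F)) (k : ℕ) :
    Integrable (fun x => (1 + ‖x‖) ^ k * ‖f x‖) μ := by
  refine (((f.integrable_pow_mul μ 0).add (f.integrable_pow_mul μ k)).const_mul
    (2 ^ (k - 1))).mono' (by fun_prop) (Eventually.of_forall fun x => ?_)
  rw [Real.norm_of_nonneg (by positivity)]
  calc (1 + ‖x‖) ^ k * ‖f x‖ ≤ 2 ^ (k - 1) * (1 + ‖x‖ ^ k) * ‖f x‖ := by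
        gcongr; simpa using add_pow_le zero_le_one (norm_nonneg x) k
    _ = _ := by simp only [Pi.add_apply]; ring

theorem integrable_mul_multilinear (f : 𝓢(E, ℂ)) {k : ℕ}
    (L : ContinuousMultilinearMap ℝ (fun _ : Fin k => E) ℂ) :
    Integrable (fun x => f x * L (fun _ => x)) μ := by
  refine ((f.integrable_pow_mul μ k).const_mul ‖L‖).mono' (by fun_prop)
    (Eventually.of_forall fun x => ?_)
  calc ‖f x * L (fun _ => x)‖ ≤ ‖f x‖ * (‖L‖ * ∏ _i : Fin k, ‖x‖) := by
        rw [norm_mul]; gcongr; exact L.le_opNorm _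
    _ = ‖L‖ * (‖x‖ ^ k * ‖f x‖) := by
        simp only [Finset.prod_const, Finset.card_univ, Fintype.card_fin]; ring

end Weights

section Moments

variable {V : Type*} [NormedAddCommGroup V] [InnerProductSpace ℝ V] [FiniteDimensional ℝ V]
  [MeasurableSpace V] [BorelSpace V]

theorem integral_prod_inner_smul_eq_zero (f : 𝓢(V, ℂ)) {k : ℕ}
    (h : iteratedFDeriv ℝ k (𝓕 ⇑f) 0 = 0) (m : Fin k → V) :
    ∫ v, (∏ i, ⟪v, m i⟫) • f v = 0 := by
  have hint : ∀ j : ℕ, Integrable (fun v => ‖v‖ ^ j * ‖f v‖) := f.integrable_pow_mul volume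
  rw [Real.iteratedFDeriv_fourier (N := k) (fun j _ => hint j) f.continuous.aestronglyMeasurable
    le_rfl, Real.fourier_eq] at h
  have h0 := congrArg (fun L => L m) h
  simp only [inner_zero_right, neg_zero, AddChar.map_zero_eq_one, one_smul, zero_apply] at h0
  rw [ContinuousMultilinearMap.integral_apply (VectorFourier.integrable_fourierPowSMulRight _
    (hint k) f.continuous.aestronglyMeasurable)] at h0
  simp only [VectorFourier.fourierPowSMulRight_apply, integral_smul] at h0
  simpa [innerSL_apply_apply ℝ, Real.pi_ne_zero, Complex.I_ne_zero] using h0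

theorem integral_mul_multilinear_eq_zero (f : 𝓢(V, ℂ)) {k : ℕ}
    (h : iteratedFDeriv ℝ k (𝓕 ⇑f) 0 = 0)
    (L : ContinuousMultilinearMap ℝ (fun _ : Fin k => V) ℂ) :
    ∫ x, f x * L (fun _ => x) = 0 := by
  set b := stdOrthonormalBasis ℝ V
  set P : Fin (Module.finrank ℝ V) → V →L[ℝ] V := fun j => (innerSL ℝ (b j)).smulRight (b j)
  have hterm : ∀ (r : Fin k → Fin (Module.finrank ℝ V)) (x : V),
      f x * L (fun i => P (r i) x) = ((∏ i, ⟪x, b (r i)⟫) • f x) * L (fun i => b (r i)) := by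
    intro r x
    simp only [P, ContinuousLinearMap.smulRight_apply, innerSL_apply_apply, L.map_smul_univ,
      real_inner_comm (b _) x]
    rw [smul_mul_assoc, mul_smul_comm]
  calc ∫ x, f x * L (fun _ => x)
      = ∫ x, ∑ r : Fin k → Fin (Module.finrank ℝ V), f x * L (fun i => P (r i) x) := by
        congr! 2 with x
        have hx : ∑ j, P j x = x := by simpa [P, innerSL_apply_apply ℝ] using b.sum_repr' x
        rw [← Finset.mul_sum, ← L.map_sum (fun _ j => P j x), hx]
    _ = ∑ r : Fin k → Fin (Module.finrank ℝ V), ∫ x, f x * L (fun i => P (r i) x) :=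
        integral_finsetSum _ fun r _ =>
          integrable_mul_multilinear f (L.compContinuousLinearMap fun i => P (r i))
    _ = 0 := Finset.sum_eq_zero fun r _ => by
        simp_rw [hterm r, integral_mul_const, integral_prod_inner_smul_eq_zero f h, zero_mul]

theorem integrable_mul_taylorPoly_comp (f : 𝓢(V, ℂ)) (g : V → ℂ) (m : ℕ) (z : V)
    (T : V →L[ℝ] V) : Integrable (fun x => f x * taylorPoly g m z (T x)) := by
  simp_rw [taylorPoly_comp_eq_sum, Finset.mul_sum]
  exact integrable_finsetSum _ fun k _ => integrable_mul_multilinear f _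

theorem integral_mul_taylorPoly_comp_eq_zero (f : 𝓢(V, ℂ)) {m : ℕ}
    (hmom : ∀ k < m, iteratedFDeriv ℝ k (𝓕 ⇑f) 0 = 0) (g : V → ℂ) (z : V) (T : V →L[ℝ] V) :
    ∫ x, f x * taylorPoly g m z (T x) = 0 := by
  simp_rw [taylorPoly_comp_eq_sum, Finset.mul_sum]
  rw [integral_finsetSum _ fun k _ => integrable_mul_multilinear f _]
  exact Finset.sum_eq_zero fun k hk =>
    integral_mul_multilinear_eq_zero f (hmom k (Finset.mem_range.1 hk)) _

theorem exists_norm_integral_mul_comp_sub_smul_le (μ ν : 𝓢(V, ℂ)) {m : ℕ}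
    (hmom : ∀ k < m, iteratedFDeriv ℝ k (𝓕 ⇑μ) 0 = 0) (K : ℕ) :
    ∃ C, ∀ t, 0 ≤ t → t ≤ 2 → ∀ z : V,
      ‖∫ x, μ x * ν (z - t • x)‖ * (1 + ‖z‖) ^ K ≤ C * t ^ m := by
  obtain ⟨A, hA0, hA⟩ := ν.exists_norm_sub_taylorPoly_mul_le m K
  refine ⟨A * 2 ^ K * ∫ x, (1 + ‖x‖) ^ (m + K) * ‖μ x‖, fun t ht0 ht2 z => ?_⟩
  set T : V →L[ℝ] V := -t • ContinuousLinearMap.id ℝ V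
  set R : V → ℂ := fun x => ν (z - t • x) - taylorPoly ν m z (T x)
  have hν : Integrable (fun x => μ x * ν (z - t • x)) :=
    μ.integrable.mul_bdd (by fun_prop) (Eventually.of_forall fun x => ν.norm_le_seminorm ℝ _)
  have hsplit : ∫ x, μ x * ν (z - t • x) = ∫ x, μ x * R x := by
    simp_rw [R, mul_sub]
    rw [integral_sub hν (integrable_mul_taylorPoly_comp μ ν m z T),
      integral_mul_taylorPoly_comp_eq_zero μ hmom, sub_zero]
  have hR : ∀ x, ‖R x‖ * (1 + ‖z‖) ^ K ≤ A * 2 ^ K * t ^ m * (1 + ‖x‖) ^ (m + K) := by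
    intro x
    have hTx : T x = -(t • x) := by simp [T]
    have hnorm : ‖T x‖ = t * ‖x‖ := by rw [hTx, norm_neg, norm_smul, Real.norm_of_nonneg ht0]
    calc ‖R x‖ * (1 + ‖z‖) ^ K ≤ A * ((t * ‖x‖) ^ m * (1 + t * ‖x‖) ^ K) := by
          have := hA z (T x)
          rwa [hTx, ← sub_eq_add_neg, ← hTx, hnorm, mul_assoc] at this
      _ ≤ A * (2 ^ K * t ^ m * (1 + ‖x‖) ^ (m + K)) :=
          mul_le_mul_of_nonneg_left
            (mul_pow_mul_one_add_mul_pow_le ht0 ht2 (norm_nonneg x) m K) hA0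
      _ = A * 2 ^ K * t ^ m * (1 + ‖x‖) ^ (m + K) := by ring
  calc ‖∫ x, μ x * ν (z - t • x)‖ * (1 + ‖z‖) ^ K
      ≤ (∫ x, ‖μ x * R x‖) * (1 + ‖z‖) ^ K := by
        rw [hsplit]; gcongr; exact norm_integral_le_integral_norm _
    _ = ∫ x, ‖μ x‖ * (‖R x‖ * (1 + ‖z‖) ^ K) := by
        rw [← integral_mul_const]; simp_rw [norm_mul, mul_assoc]
    _ ≤ ∫ x, A * 2 ^ K * t ^ m * ((1 + ‖x‖) ^ (m + K) * ‖μ x‖) := by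
        refine integral_mono_of_nonneg (Eventually.of_forall fun x => by positivity)
          ((μ.integrable_one_add_norm_pow_mul _).const_mul _) (Eventually.of_forall fun x => ?_)
        calc ‖μ x‖ * (‖R x‖ * (1 + ‖z‖) ^ K)
            ≤ ‖μ x‖ * (A * 2 ^ K * t ^ m * (1 + ‖x‖) ^ (m + K)) :=
              mul_le_mul_of_nonneg_left (hR x) (norm_nonneg _)
          _ = _ := by ring
    _ = _ := by rw [integral_const_mul]; ring

end Moments

end SchwartzMap

theorem stmt_18 (n : ℕ) (μ ν : SchwartzMap (EuclideanSpace ℝ (Fin n)) ℂ)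
    (M : ℤ) (hM : -1 ≤ M)
    (hmom : ∀ m : ℕ, (m : ℤ) ≤ M →
        iteratedFDeriv ℝ m (⇑(SchwartzMap.fourierTransformCLM ℂ μ)) 0 = 0) :
    ∀ N : ℝ, 0 < N → ∃ C : ℝ, ∀ t : ℝ, 0 < t → t ≤ 2 →
      ∀ z : EuclideanSpace ℝ (Fin n),
        ‖∫ y : EuclideanSpace ℝ (Fin n),
            (t ^ (-(n : ℝ)) : ℝ) • μ (t⁻¹ • y) * ν (z - y)‖ * (1 + ‖z‖) ^ N
          ≤ C * t ^ ((M : ℝ) + 1) := by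
  intro N _
  have hm : (((M + 1).toNat : ℕ) : ℝ) = M + 1 := by
    exact_mod_cast Int.toNat_of_nonneg (by omega)
  obtain ⟨C, hC⟩ := exists_norm_integral_mul_comp_sub_smul_le μ ν
    (m := (M + 1).toNat) (fun k hk => hmom k (by omega)) ⌈N⌉₊
  refine ⟨C, fun t ht ht2 z => ?_⟩
  have hrescale := integral_rescale_mul_comp_sub μ ν ht z
  rw [finrank_euclideanSpace_fin] at hrescale
  calc _ ≤ ‖∫ x, μ x * ν (z - t • x)‖ * (1 + ‖z‖) ^ ⌈N⌉₊ := by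
        rw [hrescale, ← Real.rpow_natCast]
        gcongr
        · simp
        · exact Nat.le_ceil N
    _ ≤ C * t ^ (M + 1).toNat := hC t ht.le ht2 z
    _ = C * t ^ ((M : ℝ) + 1) := by rw [← hm, Real.rpow_natCast]
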